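/- Let n ≥ 1, 0 < p ≤ 1, 0 < q₁ < q < q₂ ≤ ∞, and define η ∈ (0,1) by 1/q = (1−η)/q₁ + η/q₂ (with η/q₂ = 0 when q₂ = ∞). Fix ψ smooth, compactly supported on ℝⁿ with ∫ψ ≠ 0, and let N denote the associated non-tangential maximal operator. For locally integrable f and t > 0 set K(t,f) = inf { ‖N f₀‖_{p,q₁} + t ‖N f₁‖_{p,q₂} : f = f₀ + f₁, f₀, f₁ locally integrable }. Then there is a constant c such that for every locally integrable f admitting at least one such decomposition with both terms finite, ‖N f‖_{p,q} ≤ c · (∫_0^∞ (t^{−η} K(t,f))^q dt/t)^{1/q}. -/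

import Mathlib

open MeasureTheory ENNReal Set

noncomputable section

abbrev Euc (n : ℕ) := EuclideanSpace ℝ (Fin n)

/-- Distribution function `m(F, lam) = |{x : lam < F x}|` (Lebesgue measure). -/
def distFn {n : ℕ} (F : Euc n → ℝ≥0∞) (lam : ℝ≥0∞) : ℝ≥0∞ :=
  volume {x | lam < F x}

/-- View a real-valued function as an `ℝ≥0∞`-valued one via its absolute value. -/
def eF {n : ℕ} (g : Euc n → ℝ) : Euc n → ℝ≥0∞ :=
  fun x => ENNReal.ofReal |g x|

/-- Dyadic Lorentz `L^{p,q}` quasinorm. -/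
def lorentzNorm {n : ℕ} (p : ℝ) (q : ℝ≥0∞) (F : Euc n → ℝ≥0∞) : ℝ≥0∞ :=
  if q = ∞ then ⨆ k : ℤ, (2 : ℝ≥0∞) ^ k * (distFn F ((2 : ℝ≥0∞) ^ k)) ^ (1/p)
  else (∑' k : ℤ, ((2 : ℝ≥0∞) ^ k * (distFn F ((2 : ℝ≥0∞) ^ k)) ^ (1/p)) ^ q.toReal) ^ (1/q.toReal)

/-- `ℓ^q(ℤ)` norm of a nonnegative sequence. -/
def ellq (q : ℝ≥0∞) (a : ℤ → ℝ≥0∞) : ℝ≥0∞ :=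
  if q = ∞ then ⨆ k : ℤ, a k else (∑' k : ℤ, (a k) ^ q.toReal) ^ (1/q.toReal)

/-- The axis-parallel closed cube centered at `c` with half side-length `r`. -/
def cube {n : ℕ} (c : Euc n) (r : ℝ) : Set (Euc n) := {y | ∀ i, |y i - c i| ≤ r}

/-- `H^p` atom with defining cube `cube c r`; `|cube c r| = (2r)^n`. -/
def IsHpAtom {n : ℕ} (p : ℝ) (a : Euc n → ℝ) (c : Euc n) (r : ℝ) : Prop :=
  0 < r ∧ Measurable a ∧ (∀ x, x ∉ cube c r → a x = 0) ∧
    (∀ᵐ x ∂(volume : Measure (Euc n)), |a x| ≤ ((((2*r)^n : ℝ)) ^ (1/p))⁻¹) ∧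
    ∀ α : Fin n → ℕ, (∑ i, α i) ≤ ⌊(n : ℝ) * (1/p - 1)⌋₊ →
      (∫ y : Euc n, (∏ i, y i ^ α i) * a y) = 0

/-- `(f * ψ_t)(y)` where `ψ_t(x) = t⁻ⁿ ψ(x/t)`. -/
def convAt {n : ℕ} (ψ f : Euc n → ℝ) (t : ℝ) (y : Euc n) : ℝ :=
  ∫ z : Euc n, f z * ((t ^ n)⁻¹ * ψ (t⁻¹ • (y - z)))

/-- Non-tangential maximal function. -/
def ntMax {n : ℕ} (ψ f : Euc n → ℝ) (x : Euc n) : ℝ≥0∞ :=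
  ⨆ (y : Euc n) (t : ℝ) (_ : 0 < t) (_ : dist x y < t), ENNReal.ofReal |convAt ψ f t y|

/-- Radial maximal function. -/
def radMax {n : ℕ} (φ f : Euc n → ℝ) (x : Euc n) : ℝ≥0∞ :=
  ⨆ (t : ℝ) (_ : 0 < t), ENNReal.ofReal |convAt φ f t x|


/-- The Peetre `K`-functional for the couple `(H^{p,q₁}, H^{p,q₂})`, with the `H^{p,q}`
quasinorm computed via the non-tangential maximal operator associated to `ψ`. -/
def Kfun {n : ℕ} (ψ : Euc n → ℝ) (p : ℝ) (q1 q2 : ℝ≥0∞) (f : Euc n → ℝ) (t : ℝ) : ℝ≥0∞ :=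
  ⨅ (f0 : Euc n → ℝ) (f1 : Euc n → ℝ) (_ : LocallyIntegrable f0 volume)
    (_ : LocallyIntegrable f1 volume) (_ : ∀ x, f x = f0 x + f1 x),
      lorentzNorm p q1 (ntMax ψ f0) + ENNReal.ofReal t * lorentzNorm p q2 (ntMax ψ f1)


/-!
Since `N (f₀ + f₁) ≤ N f₀ + N f₁`, the dyadic sequence `a k = 2^k m(N f, 2^k)^{1/p}` is dominated,
at every scale `j`, by shifted dyadic sequences of `N f₀ʲ` and `N f₁ʲ`, where `f = f₀ʲ + f₁ʲ`
nearly realises `K(2^j, f)`. This reduces the claim to the embedding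
`(ℓ^{q₁}, ℓ^{q₂})_{η,q} ↪ ℓ^q` on `ℤ`. For each `k` let `s k` be the last scale at which the
`f₁`-part still carries half of `a k`. On `{k | s k = j}` the sequence `a` is then bounded in
`ℓ^{q₁}` by the decomposition at scale `j + 1` and in `ℓ^{q₂}` by the one at scale `j`, so
log-convexity of `ℓ^r`-norms and Hölder's inequality in `j` give
`‖a‖_q^q ≲ ∑ j, (2^{-jη} K(2^j, f))^q`. Finally, monotonicity of `K` compares this dyadic sum
with `∫ (t^{-η} K(t, f))^q dt/t`.
-/

open Filter Topology

namespace LorentzInterpolation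

theorem tsum_rpow_mul_rpow_le {ι : Type*} [Countable ι] (f g : ι → ℝ≥0∞) {α β : ℝ}
    (hα : 0 ≤ α) (hβ : 0 ≤ β) (hαβ : α + β = 1) :
    ∑' i, f i ^ α * g i ^ β ≤ (∑' i, f i) ^ α * (∑' i, g i) ^ β := by
  let : MeasurableSpace ι := ⊤
  simpa only [lintegral_count] using
    ENNReal.lintegral_mul_norm_pow_le (μ := Measure.count)
      (Measurable.of_discrete (f := f)).aemeasurable (Measurable.of_discrete (f := g)).aemeasurable
      hα hβ hαβ

theorem tendsto_two_rpow_mul_atBot {γ : ℝ} (hγ : 0 < γ) :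
    Tendsto (fun j : ℤ => (2 : ℝ≥0∞) ^ ((j : ℝ) * γ)) atBot (𝓝 0) :=
  (ENNReal.tendsto_rpow_atBot_of_one_lt_base one_lt_two).comp <|
    (tendsto_intCast_atBot_iff.2 tendsto_id).atBot_mul_const hγ

section ellq

variable {q : ℝ≥0∞} {a b : ℤ → ℝ≥0∞}

theorem ellq_rpow_toReal (hq0 : q ≠ 0) (hq : q ≠ ∞) :
    ellq q a ^ q.toReal = ∑' k, a k ^ q.toReal := by
  rw [ellq, if_neg hq, ← ENNReal.rpow_mul,
    one_div_mul_cancel (ENNReal.toReal_ne_zero.2 ⟨hq0, hq⟩), ENNReal.rpow_one]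

theorem ellq_ofReal_rpow {r : ℝ} (hr : 0 < r) : ellq (ENNReal.ofReal r) a ^ r = ∑' k, a k ^ r := by
  simpa only [ENNReal.toReal_ofReal hr.le] using
    ellq_rpow_toReal (a := a) (ENNReal.ofReal_pos.2 hr).ne' ENNReal.ofReal_ne_top

theorem le_ellq (hq : q ≠ 0) (k : ℤ) : a k ≤ ellq q a := by
  rcases eq_or_ne q ∞ with rfl | hqt
  · rw [ellq, if_pos rfl]; exact le_iSup a k
  have hr : 0 < q.toReal := ENNReal.toReal_pos hq hqt
  rw [← ENNReal.rpow_le_rpow_iff hr, ellq_rpow_toReal hq hqt]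
  exact ENNReal.le_tsum (f := fun k => a k ^ q.toReal) k

theorem ellq_mono (h : ∀ k, a k ≤ b k) : ellq q a ≤ ellq q b := by
  unfold ellq
  split_ifs
  · exact iSup_mono h
  · gcongr with k; exact h k

theorem ellq_const_mul (hq : q ≠ 0) (c : ℝ≥0∞) : ellq q (fun k => c * a k) = c * ellq q a := by
  unfold ellq
  split_ifs with hqt
  · exact (ENNReal.mul_iSup _ _).symm
  have hr : 0 < q.toReal := ENNReal.toReal_pos hq hqt
  simp only [ENNReal.mul_rpow_of_nonneg _ _ hr.le, ENNReal.tsum_mul_left]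
  rw [ENNReal.mul_rpow_of_nonneg _ _ (by positivity), ← ENNReal.rpow_mul,
    mul_one_div_cancel hr.ne', ENNReal.rpow_one]

theorem ellq_comp_sub_one : ellq q (fun k => a (k - 1)) = ellq q a := by
  unfold ellq
  split_ifs
  · exact (Equiv.subRight (1 : ℤ)).iSup_comp (g := a)
  · exact congrArg (· ^ _) ((Equiv.subRight (1 : ℤ)).tsum_eq (fun k => a k ^ q.toReal))

end ellq

theorem ellq_le_rpow_mul_rpow {q1 q η : ℝ} {q2 : ℝ≥0∞} (hq1 : 0 < q1) (hq : 0 < q)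
    (hq2 : q2 ≠ 0) (hη0 : 0 ≤ η) (hη1 : η ≤ 1)
    (hηdef : 1 / q = (1 - η) / q1 + (if q2 = ∞ then 0 else η / q2.toReal)) (x : ℤ → ℝ≥0∞) :
    ellq (ENNReal.ofReal q) x ≤ ellq (ENNReal.ofReal q1) x ^ (1 - η) * ellq q2 x ^ η := by
  set E1 := ellq (ENNReal.ofReal q1) x
  set E2 := ellq q2 x
  suffices h : ∑' k, x k ^ q ≤ E1 ^ ((1 - η) * q) * E2 ^ (η * q) by
    rwa [← ENNReal.rpow_le_rpow_iff hq, ellq_ofReal_rpow hq, ENNReal.mul_rpow_of_nonneg _ _ hq.le,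
      ← ENNReal.rpow_mul, ← ENNReal.rpow_mul]
  rcases eq_or_ne q2 ∞ with rfl | hq2t
  · have hq1e : q1 = (1 - η) * q := by
      rw [if_pos rfl, add_zero, div_eq_div_iff hq.ne' hq1.ne'] at hηdef
      linarith
    calc ∑' k, x k ^ q = ∑' k, x k ^ q1 * x k ^ (η * q) := by
          congr with k
          rw [← ENNReal.rpow_add_of_nonneg _ _ hq1.le (by positivity), hq1e]
          ring_nf
      _ ≤ ∑' k, x k ^ q1 * E2 ^ (η * q) := by
          gcongr with k
          exact le_ellq ENNReal.top_ne_zero k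
      _ = E1 ^ ((1 - η) * q) * E2 ^ (η * q) := by
          rw [ENNReal.tsum_mul_right, ← ellq_ofReal_rpow hq1, ← hq1e]
  · set r := q2.toReal
    have hr : 0 < r := ENNReal.toReal_pos hq2 hq2t
    rw [if_neg hq2t] at hηdef
    have hsum : (1 - η) * q / q1 + η * q / r = 1 := by
      rw [mul_div_right_comm, mul_div_right_comm η, ← add_mul, ← hηdef, one_div_mul_cancel hq.ne']
    calc ∑' k, x k ^ q = ∑' k, (x k ^ q1) ^ ((1 - η) * q / q1) * (x k ^ r) ^ (η * q / r) := by
          congr with k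
          rw [← ENNReal.rpow_mul, ← ENNReal.rpow_mul, mul_div_cancel₀ _ hq1.ne',
            mul_div_cancel₀ _ hr.ne', ← ENNReal.rpow_add_of_nonneg _ _ (by positivity)
            (by positivity)]
          ring_nf
      _ ≤ (∑' k, x k ^ q1) ^ ((1 - η) * q / q1) * (∑' k, x k ^ r) ^ (η * q / r) :=
          tsum_rpow_mul_rpow_le _ _ (by positivity) (by positivity) hsum
      _ = E1 ^ ((1 - η) * q) * E2 ^ (η * q) := by
          rw [← ellq_ofReal_rpow hq1, ← ellq_rpow_toReal hq2 hq2t, ← ENNReal.rpow_mul,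
            ← ENNReal.rpow_mul, mul_div_cancel₀ _ hq1.ne', mul_div_cancel₀ _ hr.ne']

theorem exists_switch_index {a : ℝ≥0∞} {b c : ℤ → ℝ≥0∞} (habc : ∀ j, a ≤ b j + c j)
    (hb : Tendsto b atBot (𝓝 0)) (hc : Tendsto c atTop (𝓝 0)) :
    ∃ s : ℤ, a ≤ 2 * c s ∧ a ≤ 2 * b (s + 1) := by
  rcases eq_zero_or_pos a with rfl | ha
  · exact ⟨0, zero_le, zero_le⟩
  have hbc : ∀ j, a ≤ 2 * b j ∨ a ≤ 2 * c j := by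
    intro j
    by_contra! h
    have : 2 * a < a + a :=
      (mul_le_mul_right (habc j) 2).trans_lt (by rw [mul_add]; exact ENNReal.add_lt_add h.1 h.2)
    rw [two_mul] at this
    exact this.false
  have h2b : ∀ᶠ j in atBot, 2 * b j < a := by
    simpa using (ENNReal.Tendsto.const_mul hb (Or.inr ENNReal.ofNat_ne_top)).eventually
      (gt_mem_nhds (by simpa using ha))
  have h2c : ∀ᶠ j in atTop, 2 * c j < a := by
    simpa using (ENNReal.Tendsto.const_mul hc (Or.inr ENNReal.ofNat_ne_top)).eventually
      (gt_mem_nhds (by simpa using ha))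
  set J := {j | a ≤ 2 * c j}
  have hJ : BddAbove J := by
    obtain ⟨N, hN⟩ := eventually_atTop.1 h2c
    exact ⟨N, fun j hj => not_lt.1 fun hNj => (hN j hNj.le).not_ge hj⟩
  have hJne : J.Nonempty := by
    obtain ⟨j, hj⟩ := h2b.exists
    exact ⟨j, (hbc j).resolve_left hj.not_ge⟩
  obtain ⟨s, hs, hmax⟩ := Int.exists_greatest_of_bdd hJ hJne
  exact ⟨s, hs, (hbc (s + 1)).resolve_right fun h => by have := hmax _ h; omega⟩

theorem tsum_rpow_le_of_le_two_mul {q1 q η : ℝ} {q2 : ℝ≥0∞} (hq1 : 0 < q1) (hq : 0 < q)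
    (hq2 : q2 ≠ 0) (hη0 : 0 ≤ η) (hη1 : η ≤ 1)
    (hηdef : 1 / q = (1 - η) / q1 + (if q2 = ∞ then 0 else η / q2.toReal))
    {x b c : ℤ → ℝ≥0∞} (hb : ∀ k, x k ≤ 2 * b k) (hc : ∀ k, x k ≤ 2 * c k) :
    ∑' k, x k ^ q ≤ 2 ^ q * (ellq (ENNReal.ofReal q1) b ^ (1 - η) * ellq q2 c ^ η) ^ q := by
  have h1η : 0 ≤ 1 - η := sub_nonneg.2 hη1
  have hq1' : ENNReal.ofReal q1 ≠ 0 := by simpa using hq1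
  calc ∑' k, x k ^ q = ellq (ENNReal.ofReal q) x ^ q := (ellq_ofReal_rpow hq).symm
    _ ≤ ((2 * ellq (ENNReal.ofReal q1) b) ^ (1 - η) * (2 * ellq q2 c) ^ η) ^ q := by
        gcongr
        refine (ellq_le_rpow_mul_rpow hq1 hq hq2 hη0 hη1 hηdef x).trans ?_
        rw [← ellq_const_mul hq1', ← ellq_const_mul hq2]
        gcongr
        exacts [ellq_mono hb, ellq_mono hc]
    _ = 2 ^ q * (ellq (ENNReal.ofReal q1) b ^ (1 - η) * ellq q2 c ^ η) ^ q := by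
        rw [ENNReal.mul_rpow_of_nonneg _ _ h1η, ENNReal.mul_rpow_of_nonneg _ _ hη0,
          mul_mul_mul_comm, ← ENNReal.rpow_add_of_nonneg _ _ h1η hη0, sub_add_cancel,
          ENNReal.rpow_one, ENNReal.mul_rpow_of_nonneg _ _ hq.le]

theorem tsum_rpow_le_of_forall_le_add_of_tendsto {q1 q η : ℝ} {q2 : ℝ≥0∞} (hq1 : 0 < q1)
    (hq : 0 < q) (hq2 : q2 ≠ 0) (hη0 : 0 ≤ η) (hη1 : η ≤ 1)
    (hηdef : 1 / q = (1 - η) / q1 + (if q2 = ∞ then 0 else η / q2.toReal))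
    {a B C : ℤ → ℝ≥0∞} {b c : ℤ → ℤ → ℝ≥0∞} (habc : ∀ j k, a k ≤ b j k + c j k)
    (hb : ∀ j, ellq (ENNReal.ofReal q1) (b j) ≤ B j) (hc : ∀ j, ellq q2 (c j) ≤ C j)
    (hB : Tendsto B atBot (𝓝 0)) (hC : Tendsto C atTop (𝓝 0)) :
    ∑' k, a k ^ q ≤ 2 ^ q * ∑' j, (B (j + 1) ^ (1 - η) * C j ^ η) ^ q := by
  have hbk : ∀ k, Tendsto (fun j => b j k) atBot (𝓝 0) := fun k =>
    tendsto_of_tendsto_of_tendsto_of_le_of_le tendsto_const_nhds hB (fun _ => zero_le)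
      fun j => (le_ellq (by simpa using hq1) k).trans (hb j)
  have hck : ∀ k, Tendsto (fun j => c j k) atTop (𝓝 0) := fun k =>
    tendsto_of_tendsto_of_tendsto_of_le_of_le tendsto_const_nhds hC (fun _ => zero_le)
      fun j => (le_ellq hq2 k).trans (hc j)
  choose s hs using fun k => exists_switch_index (habc · k) (hbk k) (hck k)
  set x : ℤ → ℤ → ℝ≥0∞ := fun j k => if s k = j then a k else 0
  have hslice : ∀ j, ∑' k, x j k ^ q ≤ 2 ^ q * (B (j + 1) ^ (1 - η) * C j ^ η) ^ q := by
    intro j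
    refine (tsum_rpow_le_of_le_two_mul hq1 hq hq2 hη0 hη1 hηdef (b := b (j + 1)) (c := c j)
      (fun k => ?_) (fun k => ?_)).trans (by gcongr; exacts [hb _, hc _])
    · by_cases h : s k = j
      · simpa [x, h] using (hs k).2
      · simp [x, h]
    · by_cases h : s k = j
      · simpa [x, h] using (hs k).1
      · simp [x, h]
  calc ∑' k, a k ^ q = ∑' j, ∑' k, x j k ^ q := by
        rw [ENNReal.tsum_comm]
        exact tsum_congr fun k => by simp [x, apply_ite (· ^ q), ENNReal.zero_rpow_of_pos hq]
    _ ≤ ∑' j, 2 ^ q * (B (j + 1) ^ (1 - η) * C j ^ η) ^ q := ENNReal.tsum_le_tsum hslice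
    _ = 2 ^ q * ∑' j, (B (j + 1) ^ (1 - η) * C j ^ η) ^ q := ENNReal.tsum_mul_left

theorem tsum_two_rpow_mul_rpow_le {η q : ℝ} (hη0 : 0 ≤ η) (hη1 : η ≤ 1) (hq : 0 ≤ q)
    (v : ℤ → ℝ≥0∞) :
    ∑' j : ℤ, ((2 ^ (((j + 1 : ℤ) : ℝ) * η) * v (j + 1)) ^ (1 - η) *
        (2 ^ ((j : ℝ) * (η - 1)) * v j) ^ η) ^ q ≤
      2 ^ (η * (1 - η) * q) * ∑' j, v j ^ q := by
  have h1η : 0 ≤ 1 - η := sub_nonneg.2 hη1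
  -- the powers of two telescope: `(j + 1) η (1 - η) + j (η - 1) η = η (1 - η)`
  have hterm : ∀ j : ℤ, ((2 ^ (((j + 1 : ℤ) : ℝ) * η) * v (j + 1)) ^ (1 - η) *
      (2 ^ ((j : ℝ) * (η - 1)) * v j) ^ η) ^ q =
      2 ^ (η * (1 - η) * q) * ((v (j + 1) ^ q) ^ (1 - η) * (v j ^ q) ^ η) := fun j => by
    simp only [ENNReal.mul_rpow_of_nonneg _ _ h1η, ENNReal.mul_rpow_of_nonneg _ _ hη0,
      ENNReal.mul_rpow_of_nonneg _ _ hq, ← ENNReal.rpow_mul]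
    rw [mul_mul_mul_comm, ← ENNReal.rpow_add _ _ two_ne_zero ENNReal.ofNat_ne_top,
      mul_comm q (1 - η), mul_comm q η]
    push_cast
    ring_nf
  simp only [hterm, ENNReal.tsum_mul_left]
  refine mul_le_mul_right ?_ _
  have hshift : ∑' j : ℤ, v (j + 1) ^ q = ∑' j, v j ^ q :=
    (Equiv.addRight (1 : ℤ)).tsum_eq (fun j => v j ^ q)
  refine (tsum_rpow_mul_rpow_le (fun j => v (j + 1) ^ q) (fun j => v j ^ q) h1η hη0
    (by ring)).trans_eq ?_
  rw [hshift, ← ENNReal.rpow_add_of_nonneg _ _ h1η hη0, sub_add_cancel, ENNReal.rpow_one]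

theorem tsum_rpow_le_of_forall_le_add {q1 q η : ℝ} {q2 : ℝ≥0∞} (hq1 : 0 < q1) (hq : 0 < q)
    (hq2 : q2 ≠ 0) (hη0 : 0 < η) (hη1 : η < 1)
    (hηdef : 1 / q = (1 - η) / q1 + (if q2 = ∞ then 0 else η / q2.toReal))
    {a v : ℤ → ℝ≥0∞} {b c : ℤ → ℤ → ℝ≥0∞} (habc : ∀ j k, a k ≤ b j k + c j k)
    (hb : ∀ j : ℤ, ellq (ENNReal.ofReal q1) (b j) ≤ 2 ^ ((j : ℝ) * η) * v j)
    (hc : ∀ j : ℤ, ellq q2 (c j) ≤ 2 ^ ((j : ℝ) * (η - 1)) * v j) :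
    ∑' k, a k ^ q ≤ 2 ^ ((1 + η * (1 - η)) * q) * ∑' j, v j ^ q := by
  set S := ∑' j, v j ^ q
  rcases eq_or_ne S ∞ with hS | hS
  · rw [hS, ENNReal.mul_top (by positivity)]
    exact le_top
  have hSq : S ^ (1 / q) ≠ ∞ := ENNReal.rpow_ne_top_of_nonneg (by positivity) hS
  have hv : ∀ j, v j ≤ S ^ (1 / q) := fun j => by
    rw [← ENNReal.rpow_le_rpow_iff hq, ← ENNReal.rpow_mul, one_div_mul_cancel hq.ne',
      ENNReal.rpow_one]
    exact ENNReal.le_tsum j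
  refine (tsum_rpow_le_of_forall_le_add_of_tendsto hq1 hq hq2 hη0.le hη1.le hηdef habc hb hc
    ?_ ?_).trans ?_
  · refine tendsto_of_tendsto_of_tendsto_of_le_of_le tendsto_const_nhds ?_ (fun _ => zero_le)
      fun j => mul_le_mul_right (hv j) _
    simpa only [zero_mul] using
      ENNReal.Tendsto.mul_const (tendsto_two_rpow_mul_atBot hη0) (Or.inr hSq)
  · refine tendsto_of_tendsto_of_tendsto_of_le_of_le tendsto_const_nhds ?_ (fun _ => zero_le)
      fun j => mul_le_mul_right (hv j) _
    simpa only [zero_mul, Function.comp_def, Int.cast_neg, neg_mul_comm, neg_sub] using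
      ENNReal.Tendsto.mul_const ((tendsto_two_rpow_mul_atBot (sub_pos.2 hη1)).comp
        tendsto_neg_atTop_atBot) (Or.inr hSq)
  calc 2 ^ q * ∑' j : ℤ, ((2 ^ (((j + 1 : ℤ) : ℝ) * η) * v (j + 1)) ^ (1 - η) *
        (2 ^ ((j : ℝ) * (η - 1)) * v j) ^ η) ^ q
      ≤ 2 ^ q * (2 ^ (η * (1 - η) * q) * S) := by
        gcongr
        exact tsum_two_rpow_mul_rpow_le hη0.le hη1.le hq.le v
    _ = 2 ^ ((1 + η * (1 - η)) * q) * S := by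
        rw [← mul_assoc, ← ENNReal.rpow_add _ _ two_ne_zero ENNReal.ofNat_ne_top]
        ring_nf

theorem le_mul_tsum_rpow_of_forall_pos_add {q : ℝ} (hq : 0 < q) {A C : ℝ≥0∞} (hC : C ≠ ∞)
    {u : ℤ → ℝ≥0∞} (h : ∀ w : ℤ → ℝ≥0∞, (∀ j, w j ≠ 0) → A ≤ C * ∑' j, (u j + w j) ^ q) :
    A ≤ 2 ^ q * C * ∑' j, u j ^ q := by
  refine ENNReal.le_of_forall_pos_le_add fun ε hε _ => ?_
  set D : ℝ≥0∞ := 2 ^ q * C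
  have hD : D ≠ ∞ :=
    ENNReal.mul_ne_top (ENNReal.rpow_ne_top_of_nonneg hq.le ENNReal.ofNat_ne_top) hC
  obtain ⟨δ, hδ, hδsum⟩ := ENNReal.exists_pos_sum_of_countable'
    (ENNReal.div_pos (ENNReal.coe_ne_zero.2 hε.ne') hD).ne' ℤ
  have hδq : ∀ j, (δ j ^ (1 / q)) ^ q = δ j := fun j => by
    rw [← ENNReal.rpow_mul, one_div_mul_cancel hq.ne', ENNReal.rpow_one]
  calc A ≤ C * ∑' j, (u j + δ j ^ (1 / q)) ^ q :=
        h _ fun j => (ENNReal.rpow_pos (hδ j)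
          ((ENNReal.le_tsum j).trans_lt (hδsum.trans_le le_top)).ne).ne'
    _ ≤ C * ∑' j, 2 ^ q * (u j ^ q + δ j) := by
        gcongr with j
        have := ENNReal.add_rpow_le_two_rpow_mul_rpow_add_rpow (u j) (δ j ^ (1 / q)) hq.le
        rwa [hδq j] at this
    _ = D * ∑' j, u j ^ q + D * ∑' j, δ j := by
        rw [ENNReal.tsum_mul_left, ENNReal.tsum_add]
        ring
    _ ≤ D * ∑' j, u j ^ q + ε := by
        gcongr
        exact (mul_le_mul_right hδsum.le D).trans ENNReal.mul_div_le

theorem ofReal_two_zpow (j : ℤ) : ENNReal.ofReal ((2 : ℝ) ^ j) = (2 : ℝ≥0∞) ^ (j : ℝ) := by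
  rw [← Real.rpow_intCast, ← ENNReal.ofReal_rpow_of_pos two_pos, ENNReal.ofReal_ofNat]

section DyadicSum

variable {K : ℝ → ℝ≥0∞} {η q : ℝ}

theorem rpow_le_setLIntegral_Ico_two_zpow (hK : Monotone K) (hη : 0 ≤ η) (hq : 0 ≤ q) (j : ℤ) :
    ((2 : ℝ≥0∞) ^ (-(j : ℝ) * η) * K (2 ^ j)) ^ q ≤
      2 ^ (η * q + 1) * ∫⁻ t in Ico ((2 : ℝ) ^ j) (2 ^ (j + 1)),
        (ENNReal.ofReal (t ^ (-η)) * K t) ^ q / ENNReal.ofReal t := by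
  set m : ℝ≥0∞ := (2 ^ (-((j : ℝ) + 1) * η) * K (2 ^ j)) ^ q / 2 ^ ((j : ℝ) + 1)
  have hj1 : (j : ℝ) + 1 = ((j + 1 : ℤ) : ℝ) := by push_cast; ring
  have hm : ∀ t ∈ Ico ((2 : ℝ) ^ j) (2 ^ (j + 1)),
      m ≤ (ENNReal.ofReal (t ^ (-η)) * K t) ^ q / ENNReal.ofReal t := by
    intro t ht
    have ht0 : 0 < t := (_root_.zpow_pos two_pos j).trans_le ht.1
    have h2t : ENNReal.ofReal t ≤ 2 ^ ((j : ℝ) + 1) := by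
      rw [hj1, ← ofReal_two_zpow]
      exact ENNReal.ofReal_le_ofReal ht.2.le
    have h2η : (2 : ℝ≥0∞) ^ (-((j : ℝ) + 1) * η) ≤ ENNReal.ofReal (t ^ (-η)) := by
      rw [neg_mul, ← mul_neg, ENNReal.rpow_mul, hj1, ← ofReal_two_zpow,
        ENNReal.ofReal_rpow_of_pos (_root_.zpow_pos two_pos _)]
      exact ENNReal.ofReal_le_ofReal
        (Real.rpow_le_rpow_of_nonpos ht0 ht.2.le (neg_nonpos.2 hη))
    exact ENNReal.div_le_div (by gcongr; exact hK ht.1) h2t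
  calc ((2 : ℝ≥0∞) ^ (-(j : ℝ) * η) * K (2 ^ j)) ^ q
      = 2 ^ (η * q + 1) * (m * 2 ^ (j : ℝ)) := by
        simp only [m, ENNReal.mul_rpow_of_nonneg _ _ hq, ← ENNReal.rpow_mul, div_eq_mul_inv,
          ← ENNReal.rpow_neg]
        calc _ = (2 : ℝ≥0∞) ^ (η * q + 1 + -((j : ℝ) + 1) * η * q + -((j : ℝ) + 1) + j) *
              K (2 ^ j) ^ q := by ring_nf
          _ = _ := by
            simp only [ENNReal.rpow_add _ _ two_ne_zero ENNReal.ofNat_ne_top]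
            ring
    _ = 2 ^ (η * q + 1) * ∫⁻ _ in Ico ((2 : ℝ) ^ j) (2 ^ (j + 1)), m := by
        rw [setLIntegral_const, Real.volume_Ico, zpow_add_one₀ two_ne_zero,
          show (2 : ℝ) ^ j * 2 - 2 ^ j = 2 ^ j by ring, ofReal_two_zpow]
    _ ≤ _ := mul_le_mul_right (setLIntegral_mono_ae' measurableSet_Ico (Eventually.of_forall hm)) _

theorem tsum_dyadic_rpow_le_lintegral (hK : Monotone K) (hη : 0 ≤ η) (hq : 0 ≤ q) :
    ∑' j : ℤ, ((2 : ℝ≥0∞) ^ (-(j : ℝ) * η) * K (2 ^ j)) ^ q ≤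
      2 ^ (η * q + 1) *
        ∫⁻ t in Ioi 0, (ENNReal.ofReal (t ^ (-η)) * K t) ^ q / ENNReal.ofReal t := by
  have hdisj : Pairwise (Function.onFun Disjoint fun j : ℤ => Ico ((2 : ℝ) ^ j) (2 ^ (j + 1))) := by
    simpa [Order.succ_eq_add_one] using
      (zpow_right_mono₀ (one_le_two (α := ℝ))).pairwise_disjoint_on_Ico_succ
  refine (ENNReal.tsum_le_tsum (rpow_le_setLIntegral_Ico_two_zpow hK hη hq)).trans ?_
  rw [ENNReal.tsum_mul_left, ← lintegral_iUnion (fun _ => measurableSet_Ico) hdisj]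
  gcongr
  exact iUnion_subset fun j t ht => (_root_.zpow_pos two_pos j).trans_le ht.1

end DyadicSum

section NonTangential

variable {n : ℕ}

def dyadicSeq (p : ℝ) (F : Euc n → ℝ≥0∞) (k : ℤ) : ℝ≥0∞ :=
  2 ^ k * distFn F (2 ^ k) ^ (1 / p)

theorem lorentzNorm_eq_ellq (p : ℝ) (q : ℝ≥0∞) (F : Euc n → ℝ≥0∞) :
    lorentzNorm p q F = ellq q (dyadicSeq p F) := rfl

theorem distFn_add_le {F F0 F1 : Euc n → ℝ≥0∞} (h : ∀ x, F x ≤ F0 x + F1 x) (l0 l1 : ℝ≥0∞) :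
    distFn F (l0 + l1) ≤ distFn F0 l0 + distFn F1 l1 := by
  refine (measure_mono fun x (hx : l0 + l1 < F x) => ?_).trans (measure_union_le _ _)
  by_contra hx'
  simp only [mem_union, mem_ofPred_eq, not_or, not_lt] at hx'
  exact hx.not_ge ((h x).trans (add_le_add hx'.1 hx'.2))

theorem dyadicSeq_le_of_le_add {p : ℝ} (hp : 0 ≤ p) {F F0 F1 : Euc n → ℝ≥0∞}
    (h : ∀ x, F x ≤ F0 x + F1 x) (k : ℤ) :
    dyadicSeq p F k ≤ 2 ^ (1 + 1 / p) * (dyadicSeq p F0 (k - 1) + dyadicSeq p F1 (k - 1)) := by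
  have h2k : (2 : ℝ≥0∞) ^ k = 2 * 2 ^ (k - 1) := by
    conv_lhs => rw [← add_sub_cancel (1 : ℤ) k]
    rw [ENNReal.zpow_add two_ne_zero ENNReal.ofNat_ne_top, zpow_one]
  calc dyadicSeq p F k
      ≤ 2 ^ k * (distFn F0 (2 ^ (k - 1)) + distFn F1 (2 ^ (k - 1))) ^ (1 / p) := by
        unfold dyadicSeq
        gcongr
        rw [h2k, two_mul]
        exact distFn_add_le h _ _
    _ ≤ 2 ^ k * (2 ^ (1 / p) *
          (distFn F0 (2 ^ (k - 1)) ^ (1 / p) + distFn F1 (2 ^ (k - 1)) ^ (1 / p))) := by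
        gcongr
        exact ENNReal.add_rpow_le_two_rpow_mul_rpow_add_rpow _ _ (by positivity)
    _ = _ := by
        rw [h2k, ENNReal.rpow_add _ _ two_ne_zero ENNReal.ofNat_ne_top, ENNReal.rpow_one]
        unfold dyadicSeq
        ring

theorem integrable_mul_convKernel {ψ f : Euc n → ℝ} (hψ : Continuous ψ)
    (hψc : HasCompactSupport ψ) (hf : LocallyIntegrable f volume) {t : ℝ} (ht : t ≠ 0)
    (y : Euc n) : Integrable (fun z => f z * ((t ^ n)⁻¹ * ψ (t⁻¹ • (y - z)))) := by
  have hc : Continuous fun z => (t ^ n)⁻¹ * ψ (t⁻¹ • (y - z)) := by fun_prop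
  have hs : HasCompactSupport fun z => (t ^ n)⁻¹ * ψ (t⁻¹ • (y - z)) :=
    ((hψc.comp_smul (inv_ne_zero ht)).comp_homeomorph
      ((Homeomorph.neg _).trans (Homeomorph.addLeft y))).mul_left
  exact hf.integrable_smul_right_of_hasCompactSupport hc hs

theorem convAt_add {ψ f0 f1 : Euc n → ℝ} (hψ : Continuous ψ) (hψc : HasCompactSupport ψ)
    (h0 : LocallyIntegrable f0 volume) (h1 : LocallyIntegrable f1 volume) {t : ℝ} (ht : t ≠ 0)
    (y : Euc n) : convAt ψ (f0 + f1) t y = convAt ψ f0 t y + convAt ψ f1 t y := by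
  unfold convAt
  rw [← integral_add (integrable_mul_convKernel hψ hψc h0 ht y)
    (integrable_mul_convKernel hψ hψc h1 ht y)]
  simp only [Pi.add_apply, add_mul]

theorem ntMax_add_le {ψ f0 f1 : Euc n → ℝ} (hψ : Continuous ψ) (hψc : HasCompactSupport ψ)
    (h0 : LocallyIntegrable f0 volume) (h1 : LocallyIntegrable f1 volume) (x : Euc n) :
    ntMax ψ (f0 + f1) x ≤ ntMax ψ f0 x + ntMax ψ f1 x := by
  refine iSup_le fun y => iSup_le fun t => iSup_le fun ht => iSup_le fun hd => ?_
  have le_ntMax : ∀ g : Euc n → ℝ, ENNReal.ofReal |convAt ψ g t y| ≤ ntMax ψ g x := fun g =>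
    le_iSup_of_le y (le_iSup_of_le t (le_iSup_of_le ht (le_iSup_of_le hd le_rfl)))
  rw [convAt_add hψ hψc h0 h1 ht.ne' y]
  exact (ENNReal.ofReal_le_ofReal (abs_add_le _ _)).trans
    (ENNReal.ofReal_add_le.trans (add_le_add (le_ntMax f0) (le_ntMax f1)))

theorem Kfun_mono (ψ : Euc n → ℝ) (p : ℝ) (q1 q2 : ℝ≥0∞) (f : Euc n → ℝ) :
    Monotone (Kfun ψ p q1 q2 f) := fun _ _ hst =>
  iInf_mono fun _ => iInf_mono fun _ => iInf_mono fun _ => iInf_mono fun _ => iInf_mono fun _ => by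
    gcongr

theorem exists_decomposition_of_Kfun_lt {ψ : Euc n → ℝ} {p : ℝ} {q1 q2 : ℝ≥0∞}
    {f : Euc n → ℝ} {t : ℝ} {L : ℝ≥0∞} (h : Kfun ψ p q1 q2 f t < L) :
    ∃ f0 f1 : Euc n → ℝ, LocallyIntegrable f0 volume ∧ LocallyIntegrable f1 volume ∧
      f = f0 + f1 ∧ lorentzNorm p q1 (ntMax ψ f0) ≤ L ∧
      ENNReal.ofReal t * lorentzNorm p q2 (ntMax ψ f1) ≤ L := by
  simp only [Kfun, iInf_lt_iff] at h
  obtain ⟨f0, f1, h0, h1, hf, hlt⟩ := h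
  exact ⟨f0, f1, h0, h1, funext hf, le_self_add.trans hlt.le, le_add_self.trans hlt.le⟩

theorem exists_decomposition_of_Kfun_two_zpow_lt {ψ f : Euc n → ℝ} {p η : ℝ} {q1 q2 : ℝ≥0∞}
    {j : ℤ} {u : ℝ≥0∞} (h : Kfun ψ p q1 q2 f (2 ^ j) < 2 ^ ((j : ℝ) * η) * u) :
    ∃ g0 g1 : Euc n → ℝ, LocallyIntegrable g0 volume ∧ LocallyIntegrable g1 volume ∧
      f = g0 + g1 ∧ lorentzNorm p q1 (ntMax ψ g0) ≤ 2 ^ ((j : ℝ) * η) * u ∧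
      lorentzNorm p q2 (ntMax ψ g1) ≤ 2 ^ ((j : ℝ) * (η - 1)) * u := by
  obtain ⟨g0, g1, h0, h1, hf, hb, hc⟩ := exists_decomposition_of_Kfun_lt h
  refine ⟨g0, g1, h0, h1, hf, hb, ?_⟩
  rw [ofReal_two_zpow] at hc
  calc lorentzNorm p q2 (ntMax ψ g1)
      = 2 ^ (-(j : ℝ)) * (2 ^ (j : ℝ) * lorentzNorm p q2 (ntMax ψ g1)) := by
        rw [← mul_assoc, ← ENNReal.rpow_add _ _ two_ne_zero ENNReal.ofNat_ne_top,
          neg_add_cancel, ENNReal.rpow_zero, one_mul]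
    _ ≤ 2 ^ (-(j : ℝ)) * (2 ^ ((j : ℝ) * η) * u) := by gcongr
    _ = 2 ^ ((j : ℝ) * (η - 1)) * u := by
        rw [← mul_assoc, ← ENNReal.rpow_add _ _ two_ne_zero ENNReal.ofNat_ne_top]
        ring_nf

theorem tsum_dyadicSeq_ntMax_rpow_le {p q1 q η : ℝ} {q2 : ℝ≥0∞} (hp : 0 ≤ p) (hq1 : 0 < q1)
    (hq : 0 < q) (hq2 : q2 ≠ 0) (hη0 : 0 < η) (hη1 : η < 1)
    (hηdef : 1 / q = (1 - η) / q1 + (if q2 = ∞ then 0 else η / q2.toReal))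
    {ψ f : Euc n → ℝ} (hψ : Continuous ψ) (hψc : HasCompactSupport ψ)
    (hK : ∀ j : ℤ, Kfun ψ p (ENNReal.ofReal q1) q2 f (2 ^ j) ≠ ∞)
    {w : ℤ → ℝ≥0∞} (hw : ∀ j, w j ≠ 0) :
    ∑' k, dyadicSeq p (ntMax ψ f) k ^ q ≤ 2 ^ ((2 + 1 / p + η * (1 - η)) * q) *
      ∑' j : ℤ, (2 ^ (-(j : ℝ) * η) * Kfun ψ p (ENNReal.ofReal q1) q2 f (2 ^ j) + w j) ^ q := by
  set K := Kfun ψ p (ENNReal.ofReal q1) q2 f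
  set u : ℤ → ℝ≥0∞ := fun j => 2 ^ (-(j : ℝ) * η) * K (2 ^ j) + w j
  have hKu : ∀ j : ℤ, K (2 ^ j) < 2 ^ ((j : ℝ) * η) * u j := fun j => by
    rw [mul_add, ← mul_assoc, ← ENNReal.rpow_add _ _ two_ne_zero ENNReal.ofNat_ne_top,
      show (j : ℝ) * η + -(j : ℝ) * η = 0 by ring, ENNReal.rpow_zero, one_mul]
    exact ENNReal.lt_add_right (hK j) (mul_ne_zero (by positivity) (hw j))
  choose g0 g1 h0 h1 hf hb hc using fun j => exists_decomposition_of_Kfun_two_zpow_lt (hKu j)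
  set C : ℝ≥0∞ := 2 ^ (1 + 1 / p)
  calc ∑' k, dyadicSeq p (ntMax ψ f) k ^ q
      ≤ 2 ^ ((1 + η * (1 - η)) * q) * ∑' j, (C * u j) ^ q := by
        refine tsum_rpow_le_of_forall_le_add hq1 hq hq2 hη0 hη1 hηdef
          (b := fun j k => C * dyadicSeq p (ntMax ψ (g0 j)) (k - 1))
          (c := fun j k => C * dyadicSeq p (ntMax ψ (g1 j)) (k - 1)) (fun j k => ?_)
          (fun j => ?_) (fun j => ?_)
        · rw [← mul_add]
          refine dyadicSeq_le_of_le_add hp (fun x => ?_) k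
          rw [hf j]
          exact ntMax_add_le hψ hψc (h0 j) (h1 j) x
        · rw [ellq_const_mul (by simpa using hq1), ellq_comp_sub_one, ← lorentzNorm_eq_ellq,
            mul_left_comm]
          gcongr
          exact hb j
        · rw [ellq_const_mul hq2, ellq_comp_sub_one, ← lorentzNorm_eq_ellq, mul_left_comm]
          gcongr
          exact hc j
    _ = 2 ^ ((2 + 1 / p + η * (1 - η)) * q) * ∑' j, u j ^ q := by
        simp only [ENNReal.mul_rpow_of_nonneg _ _ hq.le, ENNReal.tsum_mul_left, C,
          ← ENNReal.rpow_mul, ← mul_assoc, ← ENNReal.rpow_add _ _ two_ne_zero ENNReal.ofNat_ne_top]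
        ring_nf

theorem tsum_dyadicSeq_ntMax_rpow_le_lintegral {p q1 q η : ℝ} {q2 : ℝ≥0∞} (hp : 0 ≤ p)
    (hq1 : 0 < q1) (hq : 0 < q) (hq2 : q2 ≠ 0) (hη0 : 0 < η) (hη1 : η < 1)
    (hηdef : 1 / q = (1 - η) / q1 + (if q2 = ∞ then 0 else η / q2.toReal))
    {ψ f : Euc n → ℝ} (hψ : Continuous ψ) (hψc : HasCompactSupport ψ) :
    ∑' k, dyadicSeq p (ntMax ψ f) k ^ q ≤ 2 ^ ((3 + 1 / p + η * (1 - η) + η) * q + 1) *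
      ∫⁻ t in Ioi 0, (ENNReal.ofReal (t ^ (-η)) * Kfun ψ p (ENNReal.ofReal q1) q2 f t) ^ q /
        ENNReal.ofReal t := by
  set K := Kfun ψ p (ENNReal.ofReal q1) q2 f
  set I := ∫⁻ t in Ioi 0, (ENNReal.ofReal (t ^ (-η)) * K t) ^ q / ENNReal.ofReal t
  have hKI : ∑' j : ℤ, (2 ^ (-(j : ℝ) * η) * K (2 ^ j)) ^ q ≤ 2 ^ (η * q + 1) * I :=
    tsum_dyadic_rpow_le_lintegral (Kfun_mono ψ p (ENNReal.ofReal q1) q2 f) hη0.le hq.le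
  rcases eq_or_ne I ∞ with hI | hI
  · rw [hI, ENNReal.mul_top (by positivity)]
    exact le_top
  have hK : ∀ j : ℤ, K (2 ^ j) ≠ ∞ := fun j hj => by
    have := (ENNReal.le_tsum j).trans hKI
    rw [hj, ENNReal.mul_top (by positivity), ENNReal.top_rpow_of_pos hq, top_le_iff] at this
    exact ENNReal.mul_ne_top (by simp) hI this
  calc ∑' k, dyadicSeq p (ntMax ψ f) k ^ q
      ≤ 2 ^ q * 2 ^ ((2 + 1 / p + η * (1 - η)) * q) *
          ∑' j : ℤ, (2 ^ (-(j : ℝ) * η) * K (2 ^ j)) ^ q :=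
        le_mul_tsum_rpow_of_forall_pos_add hq
          (ENNReal.rpow_ne_top_of_nonneg (by positivity) ENNReal.ofNat_ne_top) fun _ hw =>
            tsum_dyadicSeq_ntMax_rpow_le hp hq1 hq hq2 hη0 hη1 hηdef hψ hψc hK hw
    _ ≤ 2 ^ q * 2 ^ ((2 + 1 / p + η * (1 - η)) * q) * (2 ^ (η * q + 1) * I) := by gcongr
    _ = 2 ^ ((3 + 1 / p + η * (1 - η) + η) * q + 1) * I := by
        simp only [← mul_assoc, ← ENNReal.rpow_add _ _ two_ne_zero ENNReal.ofNat_ne_top]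
        ring_nf

end NonTangential

end LorentzInterpolation

open LorentzInterpolation

theorem stmt10_general (n : ℕ) (p : ℝ) (hp0 : 0 < p)
    (q1 q : ℝ) (q2 : ℝ≥0∞) (hq1 : 0 < q1) (hq1q : q1 < q) (hqq2 : ENNReal.ofReal q < q2)
    (η : ℝ) (hη0 : 0 < η) (hη1 : η < 1)
    (hηdef : 1/q = (1 - η)/q1 + (if q2 = ∞ then 0 else η / q2.toReal))
    (ψ : Euc n → ℝ) (hψ : ContDiff ℝ (⊤ : ℕ∞) ψ) (hψc : HasCompactSupport ψ) :
    ∃ c : ℝ, 0 < c ∧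
      ∀ f : Euc n → ℝ, LocallyIntegrable f volume →
        (∃ f0 f1 : Euc n → ℝ, LocallyIntegrable f0 volume ∧ LocallyIntegrable f1 volume ∧
          (∀ x, f x = f0 x + f1 x) ∧
          lorentzNorm p (ENNReal.ofReal q1) (ntMax ψ f0) < ∞ ∧
          lorentzNorm p q2 (ntMax ψ f1) < ∞) →
        lorentzNorm p (ENNReal.ofReal q) (ntMax ψ f) ≤
          ENNReal.ofReal c *
            (∫⁻ t in Ioi (0:ℝ),
              (ENNReal.ofReal (t ^ (-η)) * Kfun ψ p (ENNReal.ofReal q1) q2 f t) ^ q /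
                ENNReal.ofReal t) ^ (1/q) := by
  have hq : 0 < q := hq1.trans hq1q
  refine ⟨2 ^ (((3 + 1 / p + η * (1 - η) + η) * q + 1) / q), by positivity, fun f _ _ => ?_⟩
  rw [lorentzNorm_eq_ellq, ← ENNReal.rpow_le_rpow_iff hq, ellq_ofReal_rpow hq,
    ENNReal.mul_rpow_of_nonneg _ _ hq.le, ← ENNReal.rpow_mul, one_div_mul_cancel hq.ne',
    ENNReal.rpow_one, ← ENNReal.ofReal_rpow_of_pos two_pos, ENNReal.ofReal_ofNat,
    ← ENNReal.rpow_mul, div_mul_cancel₀ _ hq.ne']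
  exact tsum_dyadicSeq_ntMax_rpow_le_lintegral hp0.le hq1 hq (zero_le.trans_lt hqq2).ne' hη0 hη1
    hηdef hψ.continuous hψc

/-- One half of Theorem 2.5: `(H^{p,q₁},H^{p,q₂})_{η,q} ↪ H^{p,q}`. -/
theorem stmt10 (n : ℕ) (hn : 1 ≤ n) (p : ℝ) (hp0 : 0 < p) (hp1 : p ≤ 1)
    (q1 q : ℝ) (q2 : ℝ≥0∞) (hq1 : 0 < q1) (hq1q : q1 < q) (hqq2 : ENNReal.ofReal q < q2)
    (η : ℝ) (hη0 : 0 < η) (hη1 : η < 1)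
    (hηdef : 1/q = (1 - η)/q1 + (if q2 = ∞ then 0 else η / q2.toReal))
    (ψ : Euc n → ℝ) (hψ : ContDiff ℝ (⊤ : ℕ∞) ψ) (hψc : HasCompactSupport ψ)
    (hψi : (∫ x : Euc n, ψ x) ≠ 0) :
    ∃ c : ℝ, 0 < c ∧
      ∀ f : Euc n → ℝ, LocallyIntegrable f volume →
        (∃ f0 f1 : Euc n → ℝ, LocallyIntegrable f0 volume ∧ LocallyIntegrable f1 volume ∧
          (∀ x, f x = f0 x + f1 x) ∧
          lorentzNorm p (ENNReal.ofReal q1) (ntMax ψ f0) < ∞ ∧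
          lorentzNorm p q2 (ntMax ψ f1) < ∞) →
        lorentzNorm p (ENNReal.ofReal q) (ntMax ψ f) ≤
          ENNReal.ofReal c *
            (∫⁻ t in Ioi (0:ℝ),
              (ENNReal.ofReal (t ^ (-η)) * Kfun ψ p (ENNReal.ofReal q1) q2 f t) ^ q /
                ENNReal.ofReal t) ^ (1/q) :=
  stmt10_general n p hp0 q1 q q2 hq1 hq1q hqq2 η hη0 hη1 hηdef ψ hψ hψc
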